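/- Let A₀ = 1, A₁, …, A_{n−1} be n×n matrices over a commutative ring R each satisfying tr(A_i(XY−YX)) = 0 for fixed X, Y ∈ Matₙ(R), and let U be the n×n matrix whose i-th column is the diagonal of A_i. Then det(U) · (XY−YX)_{jj} lies in the ideal of R generated by the off-diagonal entries of XY−YX, for every j. -/
import Mathlib


theorem det_diag_in_offdiag_ideal (R : Type*) [CommRing R] (n : ℕ)
    (X Y : Matrix (Fin n) (Fin n) R)
    (A : Fin n → Matrix (Fin n) (Fin n) R)
    (hA0 : ∀ h : 0 < n, A ⟨0, h⟩ = 1)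
    (hA : ∀ i, Matrix.trace (A i * (X * Y - Y * X)) = 0)
    (U : Matrix (Fin n) (Fin n) R)
    (hU : ∀ j i, U j i = (A i) j j) :
    ∀ j : Fin n,
      U.det * (X * Y - Y * X) j j ∈
        Ideal.span {r : R | ∃ j' k : Fin n, j' ≠ k ∧ r = (X * Y - Y * X) j' k} := by
  intro j
  set Z := X * Y - Y * X with hZ
  set J := Ideal.span {r : R | ∃ j' k : Fin n, j' ≠ k ∧ r = Z j' k} with hJ
  have hgen : ∀ p k : Fin n, p ≠ k → Z p k ∈ J := by
    intro p k hpk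
    exact Ideal.subset_span ⟨p, k, hpk, rfl⟩
  have key : ∀ i, (∑ k, U k i * Z k k) ∈ J := by
    intro i
    have h := hA i
    have htr : Matrix.trace (A i * Z) = ∑ p : Fin n, ∑ k : Fin n, (A i) p k * Z k p := by
      simp [Matrix.trace, Matrix.mul_apply, Matrix.diag]
    have hsplit : ∑ p : Fin n, ∑ k : Fin n, (A i) p k * Z k p =
        (∑ p : Fin n, (A i) p p * Z p p) +
        ∑ p : Fin n, ∑ k ∈ Finset.univ.erase p, (A i) p k * Z k p := by
      rw [← Finset.sum_add_distrib]
      refine Finset.sum_congr rfl fun p _ => ?_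
      rw [← Finset.add_sum_erase _ _ (Finset.mem_univ p)]
    have hoff : (∑ p : Fin n, ∑ k ∈ Finset.univ.erase p, (A i) p k * Z k p) ∈ J := by
      refine Ideal.sum_mem _ fun p _ => Ideal.sum_mem _ fun k hk => ?_
      have hkp : k ≠ p := Finset.ne_of_mem_erase hk
      exact Ideal.mul_mem_left _ _ (hgen k p hkp)
    have heq : (∑ k, U k i * Z k k) = ∑ p : Fin n, (A i) p p * Z p p := by
      refine Finset.sum_congr rfl fun p _ => ?_
      rw [hU]
    rw [heq]
    have : (∑ p : Fin n, (A i) p p * Z p p) =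
        -(∑ p : Fin n, ∑ k ∈ Finset.univ.erase p, (A i) p k * Z k p) := by
      have h2 := htr ▸ h
      rw [hsplit] at h2
      exact eq_neg_of_add_eq_zero_left h2
    rw [this]
    exact neg_mem hoff
  have adj := Matrix.adjugate_mul U.transpose
  have hdet : U.det * Z j j = ∑ i, U.transpose.adjugate j i * ∑ k, U k i * Z k k := by
    have hcol : ∀ k : Fin n, (∑ i, U.transpose.adjugate j i * U k i) = U.det * (1 : Matrix (Fin n) (Fin n) R) j k := by
      intro k
      have := congrFun (congrFun adj j) k
      simpa [Matrix.mul_apply, Matrix.transpose_apply, Matrix.smul_apply, Matrix.det_transpose] using this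
    calc U.det * Z j j = ∑ k, U.det * (1 : Matrix (Fin n) (Fin n) R) j k * Z k k := by
          rw [Finset.sum_eq_single j]
          · simp
          · intro b _ hb; simp [Matrix.one_apply, Ne.symm hb]
          · simp
      _ = ∑ k, (∑ i, U.transpose.adjugate j i * U k i) * Z k k := by
          refine Finset.sum_congr rfl fun k _ => ?_; rw [hcol]
      _ = ∑ i, U.transpose.adjugate j i * ∑ k, U k i * Z k k := by
          simp_rw [Finset.sum_mul, Finset.mul_sum]
          rw [Finset.sum_comm]
          exact Finset.sum_congr rfl fun i _ => Finset.sum_congr rfl fun k _ => by ring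
  rw [hdet]
  exact Ideal.sum_mem _ fun i _ => Ideal.mul_mem_left _ _ (key i)
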